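/- Let z = τ·x with τ ∈ ℂ∖{0} and x ∈ ℝ^c satisfying x_1²+⋯+x_c² = 1, and suppose ∇g(z) = 0. Then V(x) ≠ 0, and for any (c−1)×c real matrix P_x whose rows form an orthonormal basis of the orthogonal complement x^⊥, det( (1/V(x)) · P_x · (Hess V)(x) · P_x^T − k · Id_{c−1} ) = (k^{c−1}/(k−2)) · det((Hess g)(z)). -/

import Mathlib

/-!
At `z = τ x` the critical-point equation reads `τ ^ (k - 1) ∇V(x) = τ x`, so Euler's identity
`x ⬝ ∇V(x) = k V(x)` gives `τ ^ (k - 2) k V(x) = 1`. Hence `V(x) ≠ 0`, `∇V(x) = k V(x) x`, and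
`Hess g(z)` is the real matrix `H = (k V(x))⁻¹ Hess V(x) - 1`. Euler's identity for the partials,
`Hess V(x) x = (k - 1) ∇V(x)`, makes `x` an eigenvector of the symmetric matrix `H` with
eigenvalue `k - 2`. Completing `P` by the row `x` to an orthogonal matrix block-diagonalises `H`,
so `det H = (k - 2) det (P H Pᵀ)`, while `V(x)⁻¹ P Hess V(x) Pᵀ - k = k P H Pᵀ`.
-/

open MvPolynomial

/-- `g(x) = -(x₁² + ⋯ + x_c²)/2 + V(x)`, extended to a polynomial over `ℂ`. -/
noncomputable def gC (c : ℕ) (V : MvPolynomial (Fin c) ℝ) : MvPolynomial (Fin c) ℂ :=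
  MvPolynomial.map (algebraMap ℝ ℂ)
    (-(MvPolynomial.C (1 / 2 : ℝ) * ∑ i, MvPolynomial.X i ^ 2) + V)

/-- The Hessian matrix of `g` at `z ∈ ℂ^c`. -/
noncomputable def hessG (c : ℕ) (V : MvPolynomial (Fin c) ℝ) (z : Fin c → ℂ) :
    Matrix (Fin c) (Fin c) ℂ :=
  Matrix.of fun i j =>
    MvPolynomial.eval z (MvPolynomial.pderiv i (MvPolynomial.pderiv j (gC c V)))

/-- The Hessian matrix of `V` at `x ∈ ℝ^c`. -/
noncomputable def hessV (c : ℕ) (V : MvPolynomial (Fin c) ℝ) (x : Fin c → ℝ) :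
    Matrix (Fin c) (Fin c) ℝ :=
  Matrix.of fun i j =>
    MvPolynomial.eval x (MvPolynomial.pderiv i (MvPolynomial.pderiv j V))

open Matrix

namespace Matrix
variable {l m n R : Type*} [Fintype l] [Fintype m] [Fintype n] [DecidableEq l] [DecidableEq m]
  [DecidableEq n] [CommRing R]

theorem det_mul_mul_transpose_of_mul_transpose_eq_one (hcard : Fintype.card n = Fintype.card l)
    {Q : Matrix l n R} (hQ : Q * Qᵀ = 1) (H : Matrix n n R) : (Q * H * Qᵀ).det = H.det := by
  let e : n ≃ l := Fintype.equivOfCardEq hcard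
  set Q' : Matrix n n R := Q.submatrix e id
  have hQ' (M : Matrix n n R) : Q' * M * Q'ᵀ = (Q * M * Qᵀ).submatrix e e := by
    ext; simp [Q', mul_apply, Finset.sum_mul]
  have hdet : Q'.det * Q'.det = 1 := by
    simpa [hQ', hQ] using congr_arg det (hQ' 1)
  calc (Q * H * Qᵀ).det = (Q' * H * Q'ᵀ).det := by rw [hQ', det_submatrix_equiv_self]
    _ = Q'.det * Q'.det * H.det := by rw [det_mul, det_mul, det_transpose]; ring
    _ = H.det := by rw [hdet, one_mul]

theorem det_eq_det_mul_mul_transpose_mul_of_mulVec_eq_smul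
    (hcard : Fintype.card n = Fintype.card m + 1) {H : Matrix n n R} (hH : H.IsSymm)
    {x : n → R} {μ : R} (hHx : H *ᵥ x = μ • x) (hx : x ⬝ᵥ x = 1)
    {P : Matrix m n R} (hP : P * Pᵀ = 1) (hPx : P *ᵥ x = 0) :
    H.det = (P * H * Pᵀ).det * μ := by
  set X : Matrix Unit n R := replicateRow Unit x
  have hXH : X * H = μ • X := by
    rw [← replicateRow_vecMul, ← mulVec_transpose, hH.eq, hHx, replicateRow_smul]
  have hHX : H * Xᵀ = μ • Xᵀ := by
    rw [transpose_replicateRow, ← replicateCol_mulVec, hHx, replicateCol_smul]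
  have hPX : P * Xᵀ = 0 := by
    rw [transpose_replicateRow, ← replicateCol_mulVec, hPx]
    rfl
  have hXP : X * Pᵀ = 0 := by
    rw [← transpose_transpose (X * Pᵀ), transpose_mul, transpose_transpose, hPX, transpose_zero]
  have hXX : X * Xᵀ = 1 := by
    ext
    simp [X, transpose_replicateRow, hx]
  set Q : Matrix (m ⊕ Unit) n R := fromRows P X
  have hQQ : Q * Qᵀ = 1 := by
    rw [transpose_fromRows, fromRows_mul_fromCols, hP, hPX, hXP, hXX, fromBlocks_one]
  have hQHQ : Q * H * Qᵀ = fromBlocks (P * H * Pᵀ) 0 0 (μ • 1) := by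
    rw [transpose_fromRows, fromRows_mul, fromRows_mul_fromCols, Matrix.mul_assoc P H Xᵀ, hHX,
      hXH, Matrix.mul_smul, hPX, smul_mul, hXP, smul_mul, hXX, smul_zero, smul_zero]
  rw [← det_mul_mul_transpose_of_mul_transpose_eq_one (by simp [hcard]) hQQ H, hQHQ,
    det_fromBlocks_zero₂₁, det_smul, det_one]
  simp

end Matrix

namespace MvPolynomial
variable {σ R S : Type*}

theorem pderiv_pderiv_comm [CommRing R] (i j : σ) (p : MvPolynomial σ R) :
    pderiv i (pderiv j p) = pderiv j (pderiv i p) := by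
  have h : ⁅pderiv i, pderiv j⁆ = (0 : Derivation R (MvPolynomial σ R) (MvPolynomial σ R)) :=
    derivation_ext fun l => by
      classical
      rw [Derivation.commutator_apply]
      simp [pderiv_X, Pi.single_apply, apply_ite]
  have h' := congr($h p)
  rw [Derivation.commutator_apply] at h'
  simpa [sub_eq_zero] using h'

variable [CommSemiring R] [CommSemiring S] {φ : MvPolynomial σ R} {n : ℕ}

theorem IsHomogeneous.eval_mul (hφ : φ.IsHomogeneous n) (t : R) (y : σ → R) :
    eval (fun i => t * y i) φ = t ^ n * eval y φ := by
  rw [eval_eq, eval_eq, Finset.mul_sum]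
  refine Finset.sum_congr rfl fun d hd => ?_
  have hdeg : d.degree = n := by
    rw [Finsupp.degree_eq_weight_one]
    exact hφ (mem_support_iff.mp hd)
  simp_rw [mul_pow, Finset.prod_mul_distrib, Finset.prod_pow_eq_pow_sum, ← Finsupp.degree_apply,
    hdeg]
  ring

theorem IsHomogeneous.eval_mul_map (hφ : φ.IsHomogeneous n) (f : R →+* S) (t : S) (y : σ → R) :
    eval (fun i => t * f (y i)) (map f φ) = t ^ n * f (eval y φ) := by
  rw [(hφ.map f).eval_mul, map_eval]
  rfl

theorem IsHomogeneous.sum_mul_eval_pderiv [Fintype σ] (hφ : φ.IsHomogeneous n) (y : σ → R) :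
    ∑ i, y i * eval y (pderiv i φ) = n * eval y φ := by
  have h := congr_arg (eval y) hφ.sum_X_mul_pderiv
  rw [map_sum, map_nsmul] at h
  simpa [nsmul_eq_mul] using h

end MvPolynomial

variable {c k : ℕ} {V : MvPolynomial (Fin c) ℝ}

theorem hessV_isSymm (x : Fin c → ℝ) : (hessV c V x).IsSymm :=
  IsSymm.ext fun i j => by simp [hessV, pderiv_pderiv_comm]

theorem hessV_mulVec_self (hV : V.IsHomogeneous k) (x : Fin c → ℝ) :
    hessV c V x *ᵥ x = fun i => ((k - 1 : ℕ) : ℝ) * eval x (pderiv i V) := by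
  ext i
  rw [← (hV.pderiv (i := i)).sum_mul_eval_pderiv x]
  simp [mulVec, dotProduct, hessV, pderiv_pderiv_comm i, mul_comm]

theorem pderiv_gC (i : Fin c) :
    pderiv i (gC c V) = map (algebraMap ℝ ℂ) (pderiv i V) - X i := by
  have hsq : pderiv i (∑ j, X j ^ 2 : MvPolynomial (Fin c) ℝ) = C 2 * X i := by
    simp [pderiv_X, Pi.single_apply, ← map_ofNat C 2]
  rw [gC, pderiv_map, map_add, map_neg, pderiv_C_mul, hsq, ← mul_assoc, ← C_mul]
  norm_num [sub_eq_neg_add]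

theorem hessG_eq (hV : V.IsHomogeneous k) (τ : ℂ) (x : Fin c → ℝ) :
    hessG c V (fun i => τ * (x i : ℂ)) = τ ^ (k - 2) • (hessV c V x).map (↑) - 1 := by
  ext i j
  have h := ((hV.pderiv (i := j)).pderiv (i := i)).eval_mul_map (algebraMap ℝ ℂ) τ x
  simp only [Complex.coe_algebraMap, Nat.sub_sub, Nat.reduceAdd] at h
  simp only [hessG, of_apply, pderiv_gC, map_sub, pderiv_map, pderiv_X, h]
  simp [hessV, Pi.single_apply, one_apply, eq_comm]

section CriticalPoint

variable {τ : ℂ} {x : Fin c → ℝ}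

theorem pow_mul_eval_pderiv_of_critical (hk : 2 ≤ k) (hV : V.IsHomogeneous k) (hτ : τ ≠ 0)
    (hcrit : ∀ i, eval (fun i => τ * (x i : ℂ)) (pderiv i (gC c V)) = 0)
    (i : Fin c) : τ ^ (k - 2) * eval x (pderiv i V) = x i := by
  have hgrad := (hV.pderiv (i := i)).eval_mul_map (algebraMap ℝ ℂ) τ x
  simp only [Complex.coe_algebraMap] at hgrad
  have h := hcrit i
  rw [pderiv_gC, map_sub, eval_X, hgrad, show k - 1 = k - 2 + 1 by omega, pow_succ] at h
  apply mul_left_cancel₀ hτ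
  linear_combination h

theorem pow_mul_eval_eq_one_of_critical (hk : 2 ≤ k) (hV : V.IsHomogeneous k) (hτ : τ ≠ 0)
    (hcrit : ∀ i, eval (fun i => τ * (x i : ℂ)) (pderiv i (gC c V)) = 0)
    (hx : ∑ i, x i ^ 2 = 1) : τ ^ (k - 2) * ((k * eval x V : ℝ) : ℂ) = 1 := by
  rw [← hV.sum_mul_eval_pderiv x, Complex.ofReal_sum, Finset.mul_sum]
  simp_rw [Complex.ofReal_mul, mul_left_comm _ (x _ : ℂ),
    pow_mul_eval_pderiv_of_critical hk hV hτ hcrit, ← sq]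
  exact_mod_cast hx

theorem mul_eval_ne_zero_of_critical (hk : 2 ≤ k) (hV : V.IsHomogeneous k) (hτ : τ ≠ 0)
    (hcrit : ∀ i, eval (fun i => τ * (x i : ℂ)) (pderiv i (gC c V)) = 0)
    (hx : ∑ i, x i ^ 2 = 1) : (k : ℝ) * eval x V ≠ 0 := fun h => by
  simpa [h] using pow_mul_eval_eq_one_of_critical hk hV hτ hcrit hx

theorem eval_pderiv_eq_of_critical (hk : 2 ≤ k) (hV : V.IsHomogeneous k) (hτ : τ ≠ 0)
    (hcrit : ∀ i, eval (fun i => τ * (x i : ℂ)) (pderiv i (gC c V)) = 0)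
    (hx : ∑ i, x i ^ 2 = 1) (i : Fin c) : eval x (pderiv i V) = k * eval x V * x i := by
  have h := pow_mul_eval_pderiv_of_critical hk hV hτ hcrit i
  have hscale := pow_mul_eval_eq_one_of_critical hk hV hτ hcrit hx
  apply Complex.ofReal_injective
  rw [Complex.ofReal_mul]
  linear_combination ((k * eval x V : ℝ) : ℂ) * h - (eval x (pderiv i V) : ℂ) * hscale

theorem hessG_eq_map_of_critical (hk : 2 ≤ k) (hV : V.IsHomogeneous k) (hτ : τ ≠ 0)
    (hcrit : ∀ i, eval (fun i => τ * (x i : ℂ)) (pderiv i (gC c V)) = 0)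
    (hx : ∑ i, x i ^ 2 = 1) :
    hessG c V (fun i => τ * (x i : ℂ)) = (((k : ℝ) * eval x V)⁻¹ • hessV c V x - 1).map (↑) := by
  rw [hessG_eq hV, eq_inv_of_mul_eq_one_left (pow_mul_eval_eq_one_of_critical hk hV hτ hcrit hx)]
  ext i j
  by_cases hij : i = j <;> simp [one_apply, hij]

theorem smul_hessV_sub_one_mulVec_of_critical (hk : 2 ≤ k) (hV : V.IsHomogeneous k)
    (hτ : τ ≠ 0) (hcrit : ∀ i, eval (fun i => τ * (x i : ℂ)) (pderiv i (gC c V)) = 0)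
    (hx : ∑ i, x i ^ 2 = 1) :
    (((k : ℝ) * eval x V)⁻¹ • hessV c V x - 1) *ᵥ x = ((k : ℝ) - 2) • x := by
  have hv := right_ne_zero_of_mul (mul_eval_ne_zero_of_critical hk hV hτ hcrit hx)
  ext i
  simp only [sub_mulVec, smul_mulVec, hessV_mulVec_self hV,
    eval_pderiv_eq_of_critical hk hV hτ hcrit hx, Nat.cast_sub (by omega : 1 ≤ k), Nat.cast_one,
    one_mulVec, Pi.sub_apply, Pi.smul_apply, smul_eq_mul]
  field_simp
  ring

end CriticalPoint

theorem stmt_9 (k c : ℕ) (hk : 3 ≤ k) (hc : 1 ≤ c)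
    (V : MvPolynomial (Fin c) ℝ) (hV : V.IsHomogeneous k)
    (τ : ℂ) (hτ : τ ≠ 0) (x : Fin c → ℝ) (hx : (∑ i, x i ^ 2) = 1)
    (z : Fin c → ℂ) (hz : z = fun i => τ * (x i : ℂ))
    (hcrit : ∀ i, MvPolynomial.eval z (MvPolynomial.pderiv i (gC c V)) = 0) :
    MvPolynomial.eval x V ≠ 0 ∧
    ∀ P : Matrix (Fin (c - 1)) (Fin c) ℝ,
      P * P.transpose = 1 → P.mulVec x = 0 →
      ((((MvPolynomial.eval x V)⁻¹ • (P * hessV c V x * P.transpose)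
          - (k : ℝ) • 1).det : ℝ) : ℂ)
        = ((k : ℂ) ^ (c - 1) / ((k : ℂ) - 2)) * (hessG c V z).det := by
  subst hz
  have hv := right_ne_zero_of_mul (mul_eval_ne_zero_of_critical (by omega) hV hτ hcrit hx)
  refine ⟨hv, fun P hP hPx => ?_⟩
  set H := ((k : ℝ) * eval x V)⁻¹ • hessV c V x - 1
  have hdet : H.det = (P * H * Pᵀ).det * ((k : ℝ) - 2) :=
    det_eq_det_mul_mul_transpose_mul_of_mulVec_eq_smul (by simp; omega)
      (((hessV_isSymm x).smul _).sub isSymm_one)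
      (smul_hessV_sub_one_mulVec_of_critical (by omega) hV hτ hcrit hx)
      (by simpa [dotProduct, sq] using hx) hP hPx
  have hPHP : (eval x V)⁻¹ • (P * hessV c V x * Pᵀ) - (k : ℝ) • 1 = (k : ℝ) • (P * H * Pᵀ) := by
    simp only [H, Matrix.mul_sub, Matrix.sub_mul, Matrix.mul_smul, Matrix.smul_mul, Matrix.mul_one,
      hP, smul_sub, smul_smul]
    field_simp
  have hk2 : (k : ℂ) - 2 ≠ 0 := by
    rw [sub_ne_zero]
    exact_mod_cast (by omega : k ≠ 2)
  have hG : hessG c V (fun i => τ * (x i : ℂ)) = H.map (↑) :=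
    hessG_eq_map_of_critical (by omega) hV hτ hcrit hx
  have hGdet : (H.map (↑)).det = (H.det : ℂ) := (Complex.ofRealHom.map_det H).symm
  rw [hG, hGdet, hdet, hPHP, det_smul, Fintype.card_fin]
  push_cast
  field_simp
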